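/- Let Λ = (Λ_i)_{i≤m} be an m-multiset in ℝ^d such that any two distinct points of supp(Λ) are at distance ≥ η > 0, let {F_n} be a van Hove sequence, and suppose Λ has uniform cluster frequencies relative to {F_n}. Let P = (P_i)_{i≤m} be a cluster of Λ with not all P_i empty, let V ⊆ ℝ^d be a bounded Borel set with diam(V) < η, let D = {x ∈ ℝ^d : x + P_i ⊆ Λ_i for all i ≤ m}, and put J(h,F_n) = Vol(⋃_{x∈D} ((h+F_n) ∩ (x+V))). Then lim_{n→∞} J(h,F_n)/Vol(F_n) = Vol(V) · freq(P,Λ), uniformly in h ∈ ℝ^d. -/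

import Mathlib

open Metric Set Filter MeasureTheory Topology

/-- The number of translates of the cluster `P` contained in `A` (inside the multiset `Λ`):
`L_P(A) = #{x : x + Pᵢ ⊆ A ∩ Λᵢ for all i}`. -/
noncomputable def clusterCount {m d : ℕ} (Λ P : Fin m → Set (EuclideanSpace ℝ (Fin d)))
    (A : Set (EuclideanSpace ℝ (Fin d))) : ℕ :=
  {x : EuclideanSpace ℝ (Fin d) | ∀ i, (fun p => x + p) '' P i ⊆ A ∩ Λ i}.ncard

/-- A van Hove sequence: nonempty bounded measurable sets of positive volume with
`Vol((∂Fₙ)^{+r})/Vol(Fₙ) → 0` for every `r > 0`. -/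
def IsVanHove {d : ℕ} (F : ℕ → Set (EuclideanSpace ℝ (Fin d))) : Prop :=
  (∀ n, (F n).Nonempty ∧ Bornology.IsBounded (F n) ∧ MeasurableSet (F n) ∧
      0 < volume (F n)) ∧
  ∀ r > (0 : ℝ),
    Tendsto (fun n => volume {x | infDist x (frontier (F n)) ≤ r} / volume (F n))
      atTop (𝓝 0)

/-- `Λ` has uniform cluster frequencies relative to `{Fₙ}`, with frequency function `freq`:
for every cluster `Q` of `Λ`, `L_Q(x+Fₙ)/Vol(Fₙ) → freq Q` uniformly in `x`. -/
def HasUCFWith {m d : ℕ} (Λ : Fin m → Set (EuclideanSpace ℝ (Fin d)))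
    (F : ℕ → Set (EuclideanSpace ℝ (Fin d)))
    (freq : (Fin m → Set (EuclideanSpace ℝ (Fin d))) → ℝ) : Prop :=
  ∀ Q : Fin m → Set (EuclideanSpace ℝ (Fin d)), (∀ i, Q i ⊆ Λ i ∧ (Q i).Finite) →
    TendstoUniformly
      (fun n x => (clusterCount Λ Q ((fun f => x + f) '' F n) : ℝ) / (volume (F n)).toReal)
      (fun _ => freq Q) atTop

/-!
Choose `R` with `V` and every `Pᵢ` inside the closed ball of radius `R` about `0`. The vectors `x`
with `x + P ⊆ Λ` are `η`-separated (each moves a fixed point of `P` into `supp Λ`), so their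
translates `x + V` are pairwise disjoint. For `A = h + Fₙ`, if `x + V` meets `A` while `x + P ⊄ A`,
or `x + P ⊆ A` while `x + V ⊄ A`, then the ball of radius `R` about `x` meets both `A` and its
complement, hence `∂A`. So `J(h, Fₙ)` differs from `L_P(h + Fₙ) · Vol(V)` by at most `Vol(V)`
times the number of `x` whose `R`-ball meets `∂A`, and packing disjoint `η/2`-balls around them
bounds that number by `Vol((∂Fₙ)^{+(R+η/2)}) / Vol(B_{η/2})`, which is `o(Vol(Fₙ))` by the van Hove
property. None of these bounds depends on `h`, so dividing by `Vol(Fₙ)` and applying UCF to `P`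
gives the uniform limit.
-/

open scoped ENNReal

theorem IsPreconnected.inter_frontier_nonempty {X : Type*} [TopologicalSpace X] {s t : Set X}
    (ht : IsPreconnected t) (hts : (t ∩ s).Nonempty) (hts' : (t \ s).Nonempty) :
    (t ∩ frontier s).Nonempty := by
  by_contra h
  have hcover : t ⊆ interior s ∪ interior sᶜ := fun z hz => by
    rw [← compl_frontier_eq_union_interior]
    exact fun hzs => h ⟨z, hz, hzs⟩
  obtain ⟨a, hat, has⟩ := hts
  obtain ⟨b, hbt, hbs⟩ := hts'
  obtain ⟨z, -, hzs, hzs'⟩ := ht _ _ isOpen_interior isOpen_interior hcover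
    ⟨a, hat, (hcover hat).resolve_right fun ha => interior_subset ha has⟩
    ⟨b, hbt, (hcover hbt).resolve_left fun hb => hbs (interior_subset hb)⟩
  exact interior_subset hzs' (interior_subset hzs)

theorem Set.Pairwise.finite_of_isBounded {X : Type*} [PseudoMetricSpace X] [ProperSpace X]
    {η : ℝ} {s : Set X} (hs : s.Pairwise (η ≤ dist · ·)) (hη : 0 < η)
    (hb : Bornology.IsBounded s) : s.Finite := by
  obtain ⟨t, ht, hcover⟩ :=
    totallyBounded_iff.1 hb.isCompact_closure.totallyBounded (η / 2) (half_pos hη)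
  have hnear : ∀ x ∈ s, ∃ y ∈ t, x ∈ ball y (η / 2) := fun x hx => by
    simpa using hcover (subset_closure hx)
  choose! f hft hf using hnear
  refine ht.of_injOn hft (fun x hx y hy hxy => ?_)
  by_contra hne
  have hxf := hf x hx
  have hyf := hf y hy
  rw [hxy, mem_ball] at hxf
  rw [mem_ball] at hyf
  linarith [hs hx hy hne, dist_triangle_right x y (f y)]

theorem ENNReal.abs_toReal_sub_le {a b c : ℝ≥0∞} (hb : b ≠ ⊤) (hc : c ≠ ⊤)
    (hab : a ≤ b + c) (hba : b ≤ a + c) : |a.toReal - b.toReal| ≤ c.toReal := by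
  have ha : a ≠ ⊤ := ne_top_of_le_ne_top (add_ne_top.2 ⟨hb, hc⟩) hab
  rw [abs_sub_le_iff]
  constructor
  · linarith [toReal_mono (add_ne_top.2 ⟨hb, hc⟩) hab, toReal_add hb hc]
  · linarith [toReal_mono (add_ne_top.2 ⟨ha, hc⟩) hba, toReal_add ha hc]

theorem TendstoUniformly.of_dist_le {ι β α : Type*} [PseudoMetricSpace α] {F G : ι → β → α}
    {f : β → α} {p : Filter ι} {e : ι → ℝ} (hG : TendstoUniformly G f p)
    (he : Tendsto e p (𝓝 0)) (hFG : ∀ᶠ n in p, ∀ x, dist (F n x) (G n x) ≤ e n) :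
    TendstoUniformly F f p := by
  rw [Metric.tendstoUniformly_iff] at hG ⊢
  intro ε hε
  filter_upwards [hG (ε / 2) (half_pos hε), he.eventually (gt_mem_nhds (half_pos hε)), hFG]
    with n hGn hen hFGn x
  calc dist (f x) (F n x) ≤ dist (f x) (G n x) + dist (F n x) (G n x) := dist_triangle_right _ _ _
    _ < ε / 2 + ε / 2 := add_lt_add_of_lt_of_le (hGn x) ((hFGn x).trans hen.le)
    _ = ε := add_halves ε

section Translates

variable {E : Type*} [NormedAddCommGroup E]

theorem add_mem_closedBall_self {R : ℝ} {x v : E} (hv : v ∈ closedBall 0 R) :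
    x + v ∈ closedBall x R := by
  simpa using hv

theorem pairwiseDisjoint_image_add_left {η : ℝ} {s V : Set E} (hs : s.Pairwise (η ≤ dist · ·))
    (hV : Bornology.IsBounded V) (hVd : diam V < η) :
    s.PairwiseDisjoint fun x => (x + ·) '' V := by
  intro x hx y hy hxy
  rw [Function.onFun, disjoint_left]
  rintro _ ⟨v, hv, rfl⟩ ⟨w, hw, hwv⟩
  have hxy' : dist x y = dist w v := by
    rw [dist_eq_norm, dist_eq_norm]
    congr 1
    grind
  linarith [hs hx hy hxy, dist_le_diam_of_mem hV hw hv]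

variable [MeasurableSpace E] [BorelSpace E] (μ : Measure E) [μ.IsAddLeftInvariant]

theorem measure_image_add_left (x : E) (V : Set E) : μ ((x + ·) '' V) = μ V := by
  rw [image_add_left, measure_preimage_add]

theorem measure_biUnion_image_add_left_le {s : Set E} (hs : s.Finite) (V : Set E) :
    μ (⋃ x ∈ s, (x + ·) '' V) ≤ s.ncard * μ V := by
  calc μ (⋃ x ∈ s, (x + ·) '' V) = μ (⋃ x ∈ hs.toFinset, (x + ·) '' V) := by simp
    _ ≤ ∑ x ∈ hs.toFinset, μ ((x + ·) '' V) := measure_biUnion_finset_le _ _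
    _ = s.ncard * μ V := by simp [ncard_eq_toFinset_card s hs]

theorem ncard_mul_measure_le_of_pairwiseDisjoint {s V T : Set E} (hs : s.Finite)
    (hd : s.PairwiseDisjoint fun x => (x + ·) '' V) (hV : MeasurableSet V)
    (hT : ∀ x ∈ s, (x + ·) '' V ⊆ T) : s.ncard * μ V ≤ μ T := by
  have hmeas : ∀ x : E, MeasurableSet ((x + ·) '' V) := fun x => by
    rw [image_add_left]
    exact measurable_const_add _ hV
  calc (s.ncard : ℝ≥0∞) * μ V = ∑ x ∈ hs.toFinset, μ ((x + ·) '' V) := by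
        simp [ncard_eq_toFinset_card s hs]
    _ = μ (⋃ x ∈ hs.toFinset, (x + ·) '' V) :=
        (measure_biUnion_finset (by simpa using hd) fun x _ => hmeas x).symm
    _ ≤ μ T := measure_mono (by simpa using hT)

theorem ncard_mul_measure_ball_le {η : ℝ} {s T : Set E} (hs : s.Finite)
    (hsep : s.Pairwise (η ≤ dist · ·)) (hT : ∀ x ∈ s, ball x (η / 2) ⊆ T) :
    s.ncard * μ (ball 0 (η / 2)) ≤ μ T := by
  have hball : ∀ x : E, (x + ·) '' ball 0 (η / 2) = ball x (η / 2) := by simp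
  refine ncard_mul_measure_le_of_pairwiseDisjoint μ hs (fun x hx y hy hxy => ?_)
    measurableSet_ball (by simpa [hball] using hT)
  simp only [Function.onFun, hball]
  exact ball_disjoint_ball (by linarith [hsep hx hy hxy])

theorem measure_infDist_frontier_image_add_left (h : E) (G : Set E) (r : ℝ) :
    μ {z | infDist z (frontier ((h + ·) '' G)) ≤ r} = μ {z | infDist z (frontier G) ≤ r} := by
  have hdist : ∀ z, infDist z (frontier ((h + ·) '' G)) = infDist (-h + z) (frontier G) :=
    fun z => by
      rw [show frontier ((h + ·) '' G) = (h + ·) '' frontier G from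
        ((Homeomorph.addLeft h).image_frontier G).symm,
        ← infDist_image (isometry_add_left h) (x := -h + z), add_neg_cancel_left]
  simp_rw [hdist]
  exact measure_preimage_add μ (-h) {z | infDist z (frontier G) ≤ r}

end Translates

section Straddle

variable {E : Type*} [NormedAddCommGroup E]

def translatesWithin (D Q A : Set E) : Set E := {x ∈ D | (x + ·) '' Q ⊆ A}

def nearFrontier (D A : Set E) (R : ℝ) : Set E := {x ∈ D | (closedBall x R ∩ frontier A).Nonempty}

variable {D Q V A : Set E} {η R : ℝ}

theorem translatesWithin_finite [ProperSpace E] (hD : D.Pairwise (η ≤ dist · ·)) (hη : 0 < η)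
    (hA : Bornology.IsBounded A) {q₀ : E} (hq₀ : q₀ ∈ Q) : (translatesWithin D Q A).Finite := by
  refine (hD.mono fun _ hx => hx.1).finite_of_isBounded hη
    ((hA.sub (Bornology.isBounded_singleton (x := q₀))).subset fun x hx => ?_)
  exact ⟨x + q₀, hx.2 ⟨q₀, hq₀, rfl⟩, q₀, rfl, add_sub_cancel_right x q₀⟩

theorem nearFrontier_finite [ProperSpace E] (hD : D.Pairwise (η ≤ dist · ·)) (hη : 0 < η)
    (hA : Bornology.IsBounded A) : (nearFrontier D A R).Finite := by
  refine (hD.mono fun _ hx => hx.1).finite_of_isBounded hη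
    ((hA.closure.subset frontier_subset_closure).cthickening (δ := R) |>.subset ?_)
  rintro x ⟨-, z, hz, hzA⟩
  exact mem_cthickening_of_dist_le x z R _ hzA (mem_closedBall'.1 hz)

theorem mem_nearFrontier_of_mem_of_notMem [NormedSpace ℝ E] {x a b : E} (hx : x ∈ D)
    (ha : a ∈ closedBall x R) (haA : a ∈ A) (hb : b ∈ closedBall x R) (hbA : b ∉ A) :
    x ∈ nearFrontier D A R :=
  ⟨hx, isPreconnected_closedBall.inter_frontier_nonempty ⟨a, ha, haA⟩ ⟨b, hb, hbA⟩⟩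

variable [ProperSpace E] [MeasurableSpace E] [BorelSpace E] (μ : Measure E) [μ.IsAddLeftInvariant]

theorem ncard_nearFrontier_mul_le (hD : D.Pairwise (η ≤ dist · ·)) (hη : 0 < η)
    (hA : Bornology.IsBounded A) :
    (nearFrontier D A R).ncard * μ (ball 0 (η / 2)) ≤
      μ {z | infDist z (frontier A) ≤ R + η / 2} := by
  refine ncard_mul_measure_ball_le μ (nearFrontier_finite hD hη hA) (hD.mono fun _ hx => hx.1) ?_
  rintro x ⟨-, y, hy, hyA⟩ z hz
  calc infDist z (frontier A) ≤ dist z y := infDist_le_dist_of_mem hyA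
    _ ≤ dist z x + dist x y := dist_triangle z x y
    _ ≤ R + η / 2 := by linarith [mem_ball.1 hz, mem_closedBall'.1 hy]

variable [NormedSpace ℝ E]

theorem measure_biUnion_inter_image_add_left_le (hD : D.Pairwise (η ≤ dist · ·)) (hη : 0 < η)
    (hA : Bornology.IsBounded A) {q₀ : E} (hq₀ : q₀ ∈ Q) (hQ : Q ⊆ closedBall 0 R)
    (hV : V ⊆ closedBall 0 R) :
    μ (⋃ x ∈ D, A ∩ (x + ·) '' V) ≤
      ((translatesWithin D Q A).ncard + (nearFrontier D A R).ncard) * μ V := by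
  set S := translatesWithin D Q A
  set B := nearFrontier D A R
  have hcover : ⋃ x ∈ D, A ∩ (x + ·) '' V ⊆ ⋃ x ∈ S ∪ B, (x + ·) '' V := by
    refine iUnion₂_subset fun x hx => ?_
    rintro _ ⟨hvA, v, hv, rfl⟩
    refine mem_biUnion ?_ ⟨v, hv, rfl⟩
    by_cases hxQ : (x + ·) '' Q ⊆ A
    · exact Or.inl ⟨hx, hxQ⟩
    · obtain ⟨_, ⟨q, hq, rfl⟩, hqA⟩ := not_subset.1 hxQ
      exact Or.inr (mem_nearFrontier_of_mem_of_notMem hx (add_mem_closedBall_self (hV hv)) hvA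
        (add_mem_closedBall_self (hQ hq)) hqA)
  have hfin : (S ∪ B).Finite :=
    (translatesWithin_finite hD hη hA hq₀).union (nearFrontier_finite hD hη hA)
  calc μ (⋃ x ∈ D, A ∩ (x + ·) '' V) ≤ μ (⋃ x ∈ S ∪ B, (x + ·) '' V) := measure_mono hcover
    _ ≤ (S ∪ B).ncard * μ V := measure_biUnion_image_add_left_le μ hfin V
    _ ≤ (S.ncard + B.ncard) * μ V := by
        gcongr
        exact_mod_cast ncard_union_le S B

theorem ncard_translatesWithin_mul_le (hD : D.Pairwise (η ≤ dist · ·)) (hη : 0 < η)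
    (hA : Bornology.IsBounded A) {q₀ : E} (hq₀ : q₀ ∈ Q) (hQ : Q ⊆ closedBall 0 R)
    (hV : V ⊆ closedBall 0 R) (hVm : MeasurableSet V) (hVd : diam V < η) :
    (translatesWithin D Q A).ncard * μ V ≤
      μ (⋃ x ∈ D, A ∩ (x + ·) '' V) + (nearFrontier D A R).ncard * μ V := by
  set S := translatesWithin D Q A
  set B := nearFrontier D A R
  set S₀ := {x ∈ S | (x + ·) '' V ⊆ A}
  have hS₀ : S₀.Finite := (translatesWithin_finite hD hη hA hq₀).subset fun _ hx => hx.1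
  have hsplit : S ⊆ S₀ ∪ B := by
    intro x hx
    by_cases hxV : (x + ·) '' V ⊆ A
    · exact Or.inl ⟨hx, hxV⟩
    · obtain ⟨_, ⟨v, hv, rfl⟩, hvA⟩ := not_subset.1 hxV
      exact Or.inr (mem_nearFrontier_of_mem_of_notMem hx.1 (add_mem_closedBall_self (hQ hq₀))
        (hx.2 ⟨q₀, hq₀, rfl⟩) (add_mem_closedBall_self (hV hv)) hvA)
  have hinside : S₀.ncard * μ V ≤ μ (⋃ x ∈ D, A ∩ (x + ·) '' V) :=
    ncard_mul_measure_le_of_pairwiseDisjoint μ hS₀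
      (pairwiseDisjoint_image_add_left (hD.mono fun _ hx => hx.1.1)
        (isBounded_closedBall.subset hV) hVd) hVm
      fun x hx => (subset_inter hx.2 Subset.rfl).trans
        (subset_biUnion_of_mem (u := fun x => A ∩ (x + ·) '' V) hx.1.1)
  calc (S.ncard : ℝ≥0∞) * μ V ≤ (S₀.ncard + B.ncard) * μ V := by
        gcongr
        exact_mod_cast (ncard_le_ncard hsplit (hS₀.union (nearFrontier_finite hD hη hA))).trans
          (ncard_union_le S₀ B)
    _ = S₀.ncard * μ V + B.ncard * μ V := add_mul _ _ _
    _ ≤ μ (⋃ x ∈ D, A ∩ (x + ·) '' V) + B.ncard * μ V := by gcongr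

theorem abs_measure_biUnion_inter_sub_ncard_le [μ.IsOpenPosMeasure]
    (hD : D.Pairwise (η ≤ dist · ·)) (hη : 0 < η) (hA : Bornology.IsBounded A) {q₀ : E}
    (hq₀ : q₀ ∈ Q) (hQ : Q ⊆ closedBall 0 R)
    (hV : V ⊆ closedBall 0 R) (hVm : MeasurableSet V) (hVd : diam V < η) (hμV : μ V ≠ ⊤)
    (hμball : μ (ball 0 (η / 2)) ≠ ⊤) (hW : μ {z | infDist z (frontier A) ≤ R + η / 2} ≠ ⊤) :
    |(μ (⋃ x ∈ D, A ∩ (x + ·) '' V)).toReal - (translatesWithin D Q A).ncard * (μ V).toReal| ≤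
      (μ V).toReal / (μ (ball 0 (η / 2))).toReal *
        (μ {z | infDist z (frontier A) ≤ R + η / 2}).toReal := by
  set B := nearFrontier D A R
  set c := (μ (ball 0 (η / 2))).toReal
  set W := μ {z | infDist z (frontier A) ≤ R + η / 2}
  have hc : 0 < c := ENNReal.toReal_pos (measure_ball_pos μ 0 (half_pos hη)).ne' hμball
  have hB : (B.ncard : ℝ) ≤ W.toReal / c := by
    rw [le_div_iff₀ hc]
    simpa [ENNReal.toReal_mul] using ENNReal.toReal_mono hW (ncard_nearFrontier_mul_le μ hD hη hA)
  have hupper := measure_biUnion_inter_image_add_left_le μ hD hη hA hq₀ hQ hV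
  rw [add_mul] at hupper
  calc _ ≤ ((B.ncard : ℝ≥0∞) * μ V).toReal := by
        simpa [ENNReal.toReal_mul] using ENNReal.abs_toReal_sub_le
          (ENNReal.mul_ne_top (ENNReal.natCast_ne_top _) hμV)
          (ENNReal.mul_ne_top (ENNReal.natCast_ne_top _) hμV) hupper
          (ncard_translatesWithin_mul_le μ hD hη hA hq₀ hQ hV hVm hVd)
    _ = B.ncard * (μ V).toReal := by rw [ENNReal.toReal_mul, ENNReal.toReal_natCast]
    _ ≤ W.toReal / c * (μ V).toReal := by gcongr
    _ = (μ V).toReal / c * W.toReal := by ring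

end Straddle

def clusterTranslates {ι E : Type*} [Add E] (Λ P : ι → Set E) : Set E :=
  {x | ∀ i, (fun p => x + p) '' P i ⊆ Λ i}

theorem pairwise_le_dist_clusterTranslates {ι E : Type*} [SeminormedAddCommGroup E]
    {Λ P : ι → Set E} {η : ℝ} (hsep : ∀ x ∈ ⋃ i, Λ i, ∀ y ∈ ⋃ i, Λ i, x ≠ y → η ≤ dist x y)
    {i₀ : ι} {p₀ : E} (hp₀ : p₀ ∈ P i₀) : (clusterTranslates Λ P).Pairwise (η ≤ dist · ·) := by
  intro x hx y hy hxy
  have hmem : ∀ z ∈ clusterTranslates Λ P, z + p₀ ∈ ⋃ i, Λ i := fun z hz =>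
    mem_iUnion.2 ⟨i₀, hz i₀ ⟨p₀, hp₀, rfl⟩⟩
  simpa using hsep _ (hmem x hx) _ (hmem y hy) (by simpa using hxy)

section Euclidean

variable {m d : ℕ}

theorem clusterCount_eq_ncard_translatesWithin (Λ P : Fin m → Set (EuclideanSpace ℝ (Fin d)))
    (A : Set (EuclideanSpace ℝ (Fin d))) :
    clusterCount Λ P A = (translatesWithin (clusterTranslates Λ P) (⋃ i, P i) A).ncard := by
  unfold clusterCount
  congr 1
  ext x
  simp [translatesWithin, clusterTranslates, subset_inter_iff, forall_and, image_iUnion,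
    iUnion_subset_iff, and_comm]

theorem dist_volume_div_clusterCount_le {η R : ℝ} (hη : 0 < η)
    {Λ P : Fin m → Set (EuclideanSpace ℝ (Fin d))}
    (hD : (clusterTranslates Λ P).Pairwise (η ≤ dist · ·)) {i₀ : Fin m}
    {p₀ : EuclideanSpace ℝ (Fin d)} (hp₀ : p₀ ∈ P i₀) (hP : ⋃ i, P i ⊆ closedBall 0 R)
    {V : Set (EuclideanSpace ℝ (Fin d))} (hV : V ⊆ closedBall 0 R) (hVm : MeasurableSet V)
    (hVd : diam V < η) {G : Set (EuclideanSpace ℝ (Fin d))} (hG : Bornology.IsBounded G)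
    (hW : volume {z | infDist z (frontier G) ≤ R + η / 2} ≠ ⊤) (h : EuclideanSpace ℝ (Fin d)) :
    dist ((volume (⋃ x ∈ clusterTranslates Λ P, ((h + ·) '' G) ∩ (x + ·) '' V)).toReal /
        (volume G).toReal)
      ((volume V).toReal * (clusterCount Λ P ((h + ·) '' G) / (volume G).toReal)) ≤
      (volume V).toReal / (volume (ball (0 : EuclideanSpace ℝ (Fin d)) (η / 2))).toReal *
        (volume {z | infDist z (frontier G) ≤ R + η / 2} / volume G).toReal := by
  have key := abs_measure_biUnion_inter_sub_ncard_le volume hD hη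
    ((isometry_add_left h).lipschitz.isBounded_image hG) (mem_iUnion_of_mem i₀ hp₀) hP hV hVm hVd
    (measure_closedBall_lt_top.trans_le' (measure_mono hV)).ne measure_ball_lt_top.ne
    (by rwa [measure_infDist_frontier_image_add_left])
  rw [measure_infDist_frontier_image_add_left, ← clusterCount_eq_ncard_translatesWithin] at key
  set J := (volume (⋃ x ∈ clusterTranslates Λ P, ((h + ·) '' G) ∩ (x + ·) '' V)).toReal
  set L : ℝ := (clusterCount Λ P ((h + ·) '' G) : ℝ)
  set g := (volume G).toReal
  rw [Real.dist_eq, ENNReal.toReal_div, show J / g - (volume V).toReal * (L / g) =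
    (J - L * (volume V).toReal) / g by ring, abs_div, abs_of_nonneg ENNReal.toReal_nonneg,
    mul_div_assoc']
  exact div_le_div_of_nonneg_right key ENNReal.toReal_nonneg

end Euclidean

theorem stmt_7_general {m d : ℕ} {η : ℝ} (hη : 0 < η)
    (Λ : Fin m → Set (EuclideanSpace ℝ (Fin d)))
    (hsep : ∀ x ∈ ⋃ i, Λ i, ∀ y ∈ ⋃ i, Λ i, x ≠ y → η ≤ dist x y)
    (F : ℕ → Set (EuclideanSpace ℝ (Fin d))) (hF : IsVanHove F)
    (freq : (Fin m → Set (EuclideanSpace ℝ (Fin d))) → ℝ)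
    (hUCF : HasUCFWith Λ F freq)
    (P : Fin m → Set (EuclideanSpace ℝ (Fin d)))
    (hP : ∀ i, P i ⊆ Λ i ∧ (P i).Finite) (hPne : ∃ i, (P i).Nonempty)
    (V : Set (EuclideanSpace ℝ (Fin d))) (hVb : Bornology.IsBounded V)
    (hVm : MeasurableSet V) (hVd : diam V < η) :
    TendstoUniformly
      (fun n h =>
        (volume (⋃ x ∈ {x : EuclideanSpace ℝ (Fin d) | ∀ i, (fun p => x + p) '' P i ⊆ Λ i},
            ((fun f => h + f) '' F n) ∩ ((fun v => x + v) '' V))).toReal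
            / (volume (F n)).toReal)
      (fun _ => (volume V).toReal * freq P) atTop := by
  obtain ⟨i₀, p₀, hp₀⟩ := hPne
  obtain ⟨R, hR⟩ :=
    (hVb.union (finite_iUnion fun i => (hP i).2).isBounded).subset_closedBall 0
  have hR₀ : 0 < R + η / 2 := by
    have : 0 ≤ R := nonempty_closedBall.1 ⟨p₀, hR (Or.inr (mem_iUnion_of_mem i₀ hp₀))⟩
    positivity
  have hW := hF.2 (R + η / 2) hR₀
  have hWfin : ∀ᶠ n in atTop, volume {z | infDist z (frontier (F n)) ≤ R + η / 2} ≠ ⊤ :=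
    (hW.eventually (gt_mem_nhds zero_lt_one)).mono fun n hn hWn =>
      hn.ne_top (ENNReal.div_eq_top.2 (Or.inr ⟨hWn, (hF.1 n).2.1.measure_lt_top.ne⟩))
  refine ((uniformContinuous_mul_left' (volume V).toReal).comp_tendstoUniformly
    (hUCF P hP)).of_dist_le ?_ (hWfin.mono fun n hn h =>
      dist_volume_div_clusterCount_le hη (pairwise_le_dist_clusterTranslates hsep hp₀) hp₀
        (subset_union_right.trans hR) (subset_union_left.trans hR) hVm hVd (hF.1 n).2.1 hn h)
  simpa using ((ENNReal.tendsto_toReal ENNReal.zero_ne_top).comp hW).const_mul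
    ((volume V).toReal / (volume (ball (0 : EuclideanSpace ℝ (Fin d)) (η / 2))).toReal)

/-- under UCF, with `D = {x : x + Pᵢ ⊆ Λᵢ ∀i}` and
`J(h,Fₙ) = Vol(⋃_{x∈D} ((h+Fₙ) ∩ (x+V)))`, we have
`J(h,Fₙ)/Vol(Fₙ) → Vol(V)·freq(P,Λ)` uniformly in `h`. -/
theorem stmt_7 {m d : ℕ} (hm : 1 ≤ m) (hd : 1 ≤ d) {η : ℝ} (hη : 0 < η)
    (Λ : Fin m → Set (EuclideanSpace ℝ (Fin d)))
    (hsep : ∀ x ∈ ⋃ i, Λ i, ∀ y ∈ ⋃ i, Λ i, x ≠ y → η ≤ dist x y)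
    (F : ℕ → Set (EuclideanSpace ℝ (Fin d))) (hF : IsVanHove F)
    (freq : (Fin m → Set (EuclideanSpace ℝ (Fin d))) → ℝ)
    (hUCF : HasUCFWith Λ F freq)
    (P : Fin m → Set (EuclideanSpace ℝ (Fin d)))
    (hP : ∀ i, P i ⊆ Λ i ∧ (P i).Finite) (hPne : ∃ i, (P i).Nonempty)
    (V : Set (EuclideanSpace ℝ (Fin d))) (hVb : Bornology.IsBounded V)
    (hVm : MeasurableSet V) (hVd : diam V < η) :
    TendstoUniformly
      (fun n h =>
        (volume (⋃ x ∈ {x : EuclideanSpace ℝ (Fin d) | ∀ i, (fun p => x + p) '' P i ⊆ Λ i},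
            ((fun f => h + f) '' F n) ∩ ((fun v => x + v) '' V))).toReal
            / (volume (F n)).toReal)
      (fun _ => (volume V).toReal * freq P) atTop :=
  stmt_7_general hη Λ hsep F hF freq hUCF P hP hPne V hVb hVm hVd
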